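/- arXiv:1703.00819 — 8 statements merged into one kernel-verified Lean document; each statement's English description precedes it below -/
import Mathlib

section
/- Let s₁ < s₂ < s₃ be rational numbers with width w := 1/(s₂-s₁) + 1/(s₃-s₂) < 1. Define l_k := ⌊k·s₂⌋ - ⌈k·s₁⌉ + 1 and r_k := ⌊k·s₃⌋ - ⌈k·s₂⌉ + 1 for positive integers k, and let π(n) be the number of positive integers k with l_k ≤ n plus the number of positive integers k with r_k ≤ n. Then for every integer n ≥ 0, one has wn - 2 ≤ π(n) < w(n+1). In particular π(n) ≤ n for all n ≥ 0. -/
/-!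
Put `d = t - s > 0`. Since `⌊k t⌋ - ⌈k s⌉` differs from `k d` by less than `1` in either
direction, `⌊k t⌋ - ⌈k s⌉ + 1 ≤ n` holds whenever `k d < n` and implies `k d < n + 1`. So the
number of `k ≥ 1` with `⌊k t⌋ - ⌈k s⌉ + 1 ≤ n` lies between the numbers of `k ≥ 1` with
`k d < n` and with `k d < n + 1`, i.e. between `n / d - 1` and `(n + 1) / d`. Adding the two
counts for `(s₁, s₂)` and `(s₂, s₃)` gives `w n - 2 ≤ π n < w (n + 1)`, and `w < 1` turns the
upper bound into `π n < n + 1`.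
-/

section Counting

variable {α : Type*} [Field α] [LinearOrder α] [IsStrictOrderedRing α] [FloorRing α]

theorem floor_sub_ceil_add_one_le_of_sub_lt {a b : α} {n : ℤ} (h : b - a < n) :
    ⌊b⌋ - ⌈a⌉ + 1 ≤ n := by
  have : ((⌊b⌋ - ⌈a⌉ : ℤ) : α) < n := by
    push_cast
    linarith [Int.floor_le b, Int.le_ceil a]
  have : ⌊b⌋ - ⌈a⌉ < n := by exact_mod_cast this
  omega

theorem sub_lt_of_floor_sub_ceil_add_one_le {a b : α} {n : ℤ} (h : ⌊b⌋ - ⌈a⌉ + 1 ≤ n) :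
    b - a < n + 1 := by
  have : ((⌊b⌋ - ⌈a⌉ + 1 : ℤ) : α) ≤ n := by exact_mod_cast h
  push_cast at this
  linarith [Int.lt_floor_add_one b, Int.ceil_lt_add_one a]

theorem setOf_one_le_and_mul_lt_eq_Ico {d : α} (hd : 0 < d) (x : α) :
    {k : ℕ | 1 ≤ k ∧ (k : α) * d < x} = Finset.Ico 1 ⌈x / d⌉₊ := by
  ext k
  simp [Nat.lt_ceil, lt_div_iff₀ hd]

theorem card_setOf_one_le_and_mul_lt {d : α} (hd : 0 < d) (x : α) :
    Nat.card {k : ℕ | 1 ≤ k ∧ (k : α) * d < x} = ⌈x / d⌉₊ - 1 := by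
  rw [setOf_one_le_and_mul_lt_eq_Ico hd, Nat.card_coe_set_eq, Set.ncard_coe_finset, Nat.card_Ico]

theorem sub_one_le_natCeil_sub_one (x : α) : x - 1 ≤ ((⌈x⌉₊ - 1 : ℕ) : α) := by
  rcases Nat.eq_zero_or_pos ⌈x⌉₊ with h | h
  · have : x ≤ 0 := Nat.ceil_eq_zero.mp h
    simp only [h, Nat.zero_sub, Nat.cast_zero]
    linarith
  · rw [Nat.cast_sub h, Nat.cast_one]
    linarith [Nat.le_ceil x]

theorem natCeil_sub_one_lt {x : α} (hx : 0 < x) : ((⌈x⌉₊ - 1 : ℕ) : α) < x := by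
  rw [Nat.cast_sub (Nat.one_le_iff_ne_zero.mpr (Nat.ceil_pos.mpr hx).ne'), Nat.cast_one]
  linarith [Nat.ceil_lt_add_one hx.le]

theorem card_floor_sub_ceil_add_one_le_bounds {s t : α} (hst : s < t) (n : ℕ) :
    (n : α) / (t - s) - 1 ≤ Nat.card {k : ℕ // 1 ≤ k ∧ ⌊(k : α) * t⌋ - ⌈(k : α) * s⌉ + 1 ≤ n} ∧
      (Nat.card {k : ℕ // 1 ≤ k ∧ ⌊(k : α) * t⌋ - ⌈(k : α) * s⌉ + 1 ≤ n} : α) <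
        ((n : α) + 1) / (t - s) := by
  have hd : 0 < t - s := sub_pos.mpr hst
  have hsub (k : ℕ) : (k : α) * t - k * s = k * (t - s) := by ring
  have hi_finite : {k : ℕ | 1 ≤ k ∧ (k : α) * (t - s) < n + 1}.Finite := by
    rw [setOf_one_le_and_mul_lt_eq_Ico hd]
    exact Finset.finite_toSet _
  have sub_hi : {k : ℕ | 1 ≤ k ∧ ⌊(k : α) * t⌋ - ⌈(k : α) * s⌉ + 1 ≤ n} ⊆
      {k : ℕ | 1 ≤ k ∧ (k : α) * (t - s) < n + 1} := fun k ⟨hk, hkn⟩ ↦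
    ⟨hk, by rw [← hsub]; exact_mod_cast sub_lt_of_floor_sub_ceil_add_one_le hkn⟩
  have sub_lo : {k : ℕ | 1 ≤ k ∧ (k : α) * (t - s) < n} ⊆
      {k : ℕ | 1 ≤ k ∧ ⌊(k : α) * t⌋ - ⌈(k : α) * s⌉ + 1 ≤ n} := fun k ⟨hk, hkd⟩ ↦
    ⟨hk, floor_sub_ceil_add_one_le_of_sub_lt (by rw [hsub]; exact_mod_cast hkd)⟩
  have lower := Nat.card_mono (hi_finite.subset sub_hi) sub_lo
  have upper := Nat.card_mono hi_finite sub_hi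
  rw [card_setOf_one_le_and_mul_lt hd] at lower upper
  constructor
  · calc (n : α) / (t - s) - 1 ≤ ((⌈(n : α) / (t - s)⌉₊ - 1 : ℕ) : α) :=
          sub_one_le_natCeil_sub_one _
      _ ≤ _ := by exact_mod_cast lower
  · calc _ ≤ ((⌈((n : α) + 1) / (t - s)⌉₊ - 1 : ℕ) : α) := by exact_mod_cast upper
      _ < _ := natCeil_sub_one_lt (by positivity)

end Counting

theorem stmt3 (s₁ s₂ s₃ : ℚ) (h12 : s₁ < s₂) (h23 : s₂ < s₃)
    (hw : 1 / (s₂ - s₁) + 1 / (s₃ - s₂) < 1)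
    (l r : ℕ → ℤ)
    (hl : ∀ k : ℕ, l k = ⌊(k : ℚ) * s₂⌋ - ⌈(k : ℚ) * s₁⌉ + 1)
    (hr : ∀ k : ℕ, r k = ⌊(k : ℚ) * s₃⌋ - ⌈(k : ℚ) * s₂⌉ + 1)
    (π : ℕ → ℕ)
    (hπ : ∀ n : ℕ, π n = Nat.card {k : ℕ // 1 ≤ k ∧ l k ≤ (n : ℤ)} +
        Nat.card {k : ℕ // 1 ≤ k ∧ r k ≤ (n : ℤ)}) :
    ∀ n : ℕ,
      ((1 / (s₂ - s₁) + 1 / (s₃ - s₂)) * n - 2 ≤ (π n : ℚ) ∧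
        (π n : ℚ) < (1 / (s₂ - s₁) + 1 / (s₃ - s₂)) * (n + 1)) ∧
      π n ≤ n := by
  obtain rfl : l = _ := funext hl
  obtain rfl : r = _ := funext hr
  intro n
  obtain ⟨hl_lo, hl_hi⟩ := card_floor_sub_ceil_add_one_le_bounds h12 n
  obtain ⟨hr_lo, hr_hi⟩ := card_floor_sub_ceil_add_one_le_bounds h23 n
  have hπn := congrArg (Nat.cast : ℕ → ℚ) (hπ n)
  push_cast at hπn
  have upper : (π n : ℚ) < (1 / (s₂ - s₁) + 1 / (s₃ - s₂)) * (n + 1) := by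
    rw [hπn, add_mul, one_div_mul_eq_div, one_div_mul_eq_div]
    exact add_lt_add hl_hi hr_hi
  refine ⟨⟨?_, upper⟩, ?_⟩
  · rw [hπn, add_mul, one_div_mul_eq_div, one_div_mul_eq_div]
    linarith
  · have : (π n : ℚ) < n + 1 := upper.trans_le (mul_le_of_le_one_left (by positivity) hw.le)
    exact Nat.lt_succ_iff.mp (by exact_mod_cast this)
end

section
/- Let s₁ < s₂ < s₃ be rational numbers with width w := 1/(s₂-s₁) + 1/(s₃-s₂) < 1. Define the reduced degree d as the largest nonnegative integer such that exactly d of the values l_k, r_k (counted with multiplicity over all k ≥ 1) are at most d, where l_k := ⌊k·s₂⌋ - ⌈k·s₁⌉ + 1 and r_k := ⌊k·s₃⌋ - ⌈k·s₂⌉ + 1. Then d < w/(1-w). -/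
/-!
Both l_k and r_k are at least k times the length of the corresponding interval, minus one,
so fewer than (n + 1)/(s₂ - s₁) indices have l_k ≤ n and fewer than (n + 1)/(s₃ - s₂) have
r_k ≤ n. Hence π(n) < (n + 1) w, and at the fixed point d = π(d) this reads d < (d + 1) w,
which rearranges to the bound since w < 1.
-/

lemma natCard_pos_subtype_lt_of_forall_lt {K : Type*} [Field K] [LinearOrder K]
    [IsStrictOrderedRing K] [FloorSemiring K] {P : ℕ → Prop} {x : K} (hx : 0 < x)
    (hP : ∀ k, 1 ≤ k → P k → (k : K) < x) :
    (Nat.card {k : ℕ // 1 ≤ k ∧ P k} : K) < x := by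
  have hsub : {k : ℕ | 1 ≤ k ∧ P k} ⊆ ↑(Finset.Ico 1 ⌈x⌉₊) := fun k ⟨hk, hPk⟩ =>
    Finset.mem_coe.mpr (Finset.mem_Ico.mpr ⟨hk, Nat.lt_ceil.mpr (hP k hk hPk)⟩)
  have hcard : Nat.card {k : ℕ // 1 ≤ k ∧ P k} ≤ ⌈x⌉₊ - 1 :=
    (Nat.card_mono (Finset.finite_toSet _) hsub).trans (by simp)
  have hceil : 1 ≤ ⌈x⌉₊ := Nat.one_le_iff_ne_zero.mpr (Nat.ceil_pos.mpr hx).ne'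
  calc (Nat.card {k : ℕ // 1 ≤ k ∧ P k} : K) ≤ ((⌈x⌉₊ - 1 : ℕ) : K) := by exact_mod_cast hcard
    _ = (⌈x⌉₊ : K) - 1 := by rw [Nat.cast_sub hceil, Nat.cast_one]
    _ < x := by linarith [Nat.ceil_lt_add_one hx.le]

lemma mul_sub_lt_floor_sub_ceil_add_two {K : Type*} [Field K] [LinearOrder K]
    [IsStrictOrderedRing K] [FloorRing K] (s t k : K) :
    k * (t - s) < ⌊k * t⌋ - ⌈k * s⌉ + 2 := by
  linarith [mul_sub k t s, Int.sub_one_lt_floor (k * t), Int.ceil_lt_add_one (k * s)]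

lemma natCard_floor_sub_ceil_le_lt {s t : ℚ} (hst : s < t) (n : ℕ) :
    (Nat.card {k : ℕ // 1 ≤ k ∧ ⌊(k : ℚ) * t⌋ - ⌈(k : ℚ) * s⌉ + 1 ≤ (n : ℤ)} : ℚ) <
      (n + 1) / (t - s) := by
  have hts : 0 < t - s := sub_pos.mpr hst
  refine natCard_pos_subtype_lt_of_forall_lt (by positivity) fun k _ hk => ?_
  rw [lt_div_iff₀ hts]
  have hk' : ((⌊(k : ℚ) * t⌋ - ⌈(k : ℚ) * s⌉ + 1 : ℤ) : ℚ) ≤ n := by exact_mod_cast hk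
  push_cast at hk'
  linarith [mul_sub_lt_floor_sub_ceil_add_two s t (k : ℚ)]

theorem stmt4_general (s₁ s₂ s₃ : ℚ) (h12 : s₁ < s₂) (h23 : s₂ < s₃)
    (hw : 1 / (s₂ - s₁) + 1 / (s₃ - s₂) < 1)
    (l r : ℕ → ℤ)
    (hl : ∀ k : ℕ, l k = ⌊(k : ℚ) * s₂⌋ - ⌈(k : ℚ) * s₁⌉ + 1)
    (hr : ∀ k : ℕ, r k = ⌊(k : ℚ) * s₃⌋ - ⌈(k : ℚ) * s₂⌉ + 1)
    (π : ℕ → ℕ)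
    (hπ : ∀ n : ℕ, π n = Nat.card {k : ℕ // 1 ≤ k ∧ l k ≤ (n : ℤ)} +
        Nat.card {k : ℕ // 1 ≤ k ∧ r k ≤ (n : ℤ)})
    (d : ℕ) (hd : π d = d) :
    (d : ℚ) < (1 / (s₂ - s₁) + 1 / (s₃ - s₂)) /
      (1 - (1 / (s₂ - s₁) + 1 / (s₃ - s₂))) := by
  have hl_card := natCard_floor_sub_ceil_le_lt h12 d
  have hr_card := natCard_floor_sub_ceil_le_lt h23 d
  simp only [← hl, ← hr] at hl_card hr_card
  have hπd : (d : ℚ) = Nat.card {k : ℕ // 1 ≤ k ∧ l k ≤ (d : ℤ)} +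
      Nat.card {k : ℕ // 1 ≤ k ∧ r k ≤ (d : ℤ)} := by
    exact_mod_cast hd.symm.trans (hπ d)
  have hfixed : (d : ℚ) < (d + 1) * (1 / (s₂ - s₁) + 1 / (s₃ - s₂)) := by
    rw [mul_add, mul_one_div, mul_one_div]
    linarith
  rw [lt_div_iff₀ (sub_pos.mpr hw)]
  linarith

theorem stmt4 (s₁ s₂ s₃ : ℚ) (h12 : s₁ < s₂) (h23 : s₂ < s₃)
    (hw : 1 / (s₂ - s₁) + 1 / (s₃ - s₂) < 1)
    (l r : ℕ → ℤ)
    (hl : ∀ k : ℕ, l k = ⌊(k : ℚ) * s₂⌋ - ⌈(k : ℚ) * s₁⌉ + 1)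
    (hr : ∀ k : ℕ, r k = ⌊(k : ℚ) * s₃⌋ - ⌈(k : ℚ) * s₂⌉ + 1)
    (π : ℕ → ℕ)
    (hπ : ∀ n : ℕ, π n = Nat.card {k : ℕ // 1 ≤ k ∧ l k ≤ (n : ℤ)} +
        Nat.card {k : ℕ // 1 ≤ k ∧ r k ≤ (n : ℤ)})
    (d : ℕ) (hd : π d = d) (hdmax : ∀ m : ℕ, π m = m → m ≤ d) :
    (d : ℚ) < (1 / (s₂ - s₁) + 1 / (s₃ - s₂)) /
      (1 - (1 / (s₂ - s₁) + 1 / (s₃ - s₂))) :=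
  stmt4_general s₁ s₂ s₃ h12 h23 hw l r hl hr π hπ d hd
end

section
/- Let s₁ < s₂ < s₃ be rational numbers with width w := 1/(s₂-s₁) + 1/(s₃-s₂) < 1. Define l_k := ⌊k·s₂⌋ - ⌈k·s₁⌉ + 1 and r_k := ⌊k·s₃⌋ - ⌈k·s₂⌉ + 1. If l₁ ≠ 1 then the sequence (l_k)_{k≥1} is strictly increasing, and if r₁ ≠ 1 then the sequence (r_k)_{k≥1} is strictly increasing. -/
/-!
Since `⌊x⌋ + ⌊y⌋ ≤ ⌊x + y⌋` and `⌈x + y⌉ ≤ ⌈x⌉ + ⌈y⌉`, each step `k ↦ k + 1` increases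
`⌊k b⌋ - ⌈k a⌉` by at least `⌊b⌋ - ⌈a⌉ = l₁ - 1`. A gap `b - a ≥ 1` forces `l₁ ≥ 1`, so
`l₁ ≠ 1` makes every step positive; both gaps `s₂ - s₁` and `s₃ - s₂` exceed `1` because
`w < 1` is a sum of two positive terms.
-/

theorem add_one_lt_of_one_div_sub_lt_one {α : Type*} [Field α] [LinearOrder α]
    [IsStrictOrderedRing α] {a b : α} (hab : a < b) (h : 1 / (b - a) < 1) : a + 1 < b := by
  rw [div_lt_one (sub_pos.2 hab)] at h
  linarith

section FloorRing

variable {α : Type*} [Field α] [LinearOrder α] [IsStrictOrderedRing α] [FloorRing α]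

theorem floor_sub_ceil_add_le_floor_add_sub_ceil_add (a b x y : α) :
    ⌊x⌋ - ⌈y⌉ + (⌊b⌋ - ⌈a⌉) ≤ ⌊x + b⌋ - ⌈y + a⌉ := by
  linarith [Int.le_floor_add x b, Int.ceil_add_le y a]

theorem ceil_le_floor_of_add_one_le {a b : α} (hab : a + 1 ≤ b) : ⌈a⌉ ≤ ⌊b⌋ :=
  Int.ceil_le.2 (by linarith [Int.sub_one_lt_floor b])

theorem strictMono_floor_mul_sub_ceil_mul {a b : α} (hab : a + 1 ≤ b)
    (h₁ : ⌊b⌋ - ⌈a⌉ + 1 ≠ 1) :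
    StrictMono fun k : ℕ => ⌊(k : α) * b⌋ - ⌈(k : α) * a⌉ + 1 := by
  refine strictMono_nat_of_lt_succ fun k => ?_
  have hstep := floor_sub_ceil_add_le_floor_add_sub_ceil_add a b ((k : α) * b) ((k : α) * a)
  have hgap := ceil_le_floor_of_add_one_le hab
  simp only [Nat.cast_succ, add_one_mul]
  omega

end FloorRing

theorem stmt5 (s₁ s₂ s₃ : ℚ) (h12 : s₁ < s₂) (h23 : s₂ < s₃)
    (hw : 1 / (s₂ - s₁) + 1 / (s₃ - s₂) < 1)
    (l r : ℕ → ℤ)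
    (hl : ∀ k : ℕ, l k = ⌊(k : ℚ) * s₂⌋ - ⌈(k : ℚ) * s₁⌉ + 1)
    (hr : ∀ k : ℕ, r k = ⌊(k : ℚ) * s₃⌋ - ⌈(k : ℚ) * s₂⌉ + 1) :
    (l 1 ≠ 1 → ∀ k : ℕ, 1 ≤ k → l k < l (k + 1)) ∧
    (r 1 ≠ 1 → ∀ k : ℕ, 1 ≤ k → r k < r (k + 1)) := by
  have hw₁ : 0 < 1 / (s₂ - s₁) := one_div_pos.2 (sub_pos.2 h12)
  have hw₂ : 0 < 1 / (s₃ - s₂) := one_div_pos.2 (sub_pos.2 h23)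
  have hgap₁ := add_one_lt_of_one_div_sub_lt_one h12 (by linarith)
  have hgap₂ := add_one_lt_of_one_div_sub_lt_one h23 (by linarith)
  obtain rfl : l = _ := funext hl
  obtain rfl : r = _ := funext hr
  refine ⟨fun h₁ k _ => ?_, fun h₁ k _ => ?_⟩ <;> simp only [Nat.cast_one, one_mul] at h₁
  · exact strictMono_floor_mul_sub_ceil_mul hgap₁.le h₁ k.lt_succ_self
  · exact strictMono_floor_mul_sub_ceil_mul hgap₂.le h₁ k.lt_succ_self
end

section
/- Let n, m be positive integers and x a real number such that x-n, x-n+1, …, x+m are all nonzero as needed. Then Σ_{i=0}^{n} (-1)^i · C(n,i) · (x-i)_{-m} = (-1)^n · (x-n)_{-n-m} · (n+m-1)_n, where (y)_{-k} := 1/((y+1)(y+2)⋯(y+k)) and (a)_k is the falling factorial. -/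
/-!
With `g_k y = 1 / ((y+1) ⋯ (y+k))` and the backward difference `∇ f y = f (y-1) - f y`, the
alternating binomial sum is `(-1)^n ∇^n g_m x`. Over a common denominator the factors
`y + k` and `y` telescope, so `g_k` differences like a negative power: `∇ g_k y = k g_{k+1} (y-1)`.
Iterating, `∇^n g_m x = m (m+1) ⋯ (m+n-1) g_{m+n} (x-n)`, and this rising factorial is
`(n+m-1)_n`.
-/

/-- The falling factorial `(x)_m = x (x-1) ⋯ (x-m+1)`, with `(x)_0 = 1`. -/
def fall (x : ℝ) (m : ℕ) : ℝ := ∏ i ∈ Finset.range m, (x - i)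

/-- The generalized falling factorial: for `n ≥ 0`, `(x)_n = x (x-1) ⋯ (x-n+1)`;
for `n < 0`, `(x)_n = 1 / ((x+1)(x+2) ⋯ (x+(-n)))`. -/
noncomputable def gfall (x : ℝ) (n : ℤ) : ℝ :=
  if 0 ≤ n then ∏ i ∈ Finset.range n.toNat, (x - i)
  else (∏ i ∈ Finset.range (-n).toNat, (x + 1 + i))⁻¹

open Finset Polynomial fwdDiff

lemma ascPochhammer_eval_eq_prod_range {R : Type*} [CommSemiring R] (n : ℕ) (r : R) :
    (ascPochhammer R n).eval r = ∏ j ∈ range n, (r + j) := by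
  induction n with
  | zero => simp
  | succ n ih => rw [ascPochhammer_succ_eval, ih, prod_range_succ]

lemma ascPochhammer_succ_eval_left {R : Type*} [CommSemiring R] (n : ℕ) (r : R) :
    (ascPochhammer R (n + 1)).eval r = r * (ascPochhammer R n).eval (r + 1) := by
  simp [ascPochhammer_succ_left, eval_comp]

lemma inv_ascPochhammer_eval_sub_inv_ascPochhammer_eval_add_one {K : Type*} [Field K] (k : ℕ)
    (r : K) (h : (ascPochhammer K (k + 1)).eval r ≠ 0) :
    ((ascPochhammer K k).eval r)⁻¹ - ((ascPochhammer K k).eval (r + 1))⁻¹ =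
      k * ((ascPochhammer K (k + 1)).eval r)⁻¹ := by
  have hright := ascPochhammer_succ_eval k r
  have hleft := ascPochhammer_succ_eval_left k r
  have hr : (ascPochhammer K k).eval r ≠ 0 := by
    rw [hright] at h; exact left_ne_zero_of_mul h
  have hr1 : (ascPochhammer K k).eval (r + 1) ≠ 0 := by
    rw [hleft] at h; exact right_ne_zero_of_mul h
  have hA : ((ascPochhammer K k).eval r)⁻¹ = (r + k) * ((ascPochhammer K (k + 1)).eval r)⁻¹ := by
    rw [eq_mul_inv_iff_mul_eq₀ h, hright]; field_simp
  have hB : ((ascPochhammer K k).eval (r + 1))⁻¹ = r * ((ascPochhammer K (k + 1)).eval r)⁻¹ := by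
    rw [eq_mul_inv_iff_mul_eq₀ h, hleft]; field_simp
  rw [hA, hB]; ring

lemma sum_range_succ_neg_one_pow_mul_choose_mul_eq_fwdDiff_iter {R : Type*} [CommRing R]
    (f : R → R) (n : ℕ) (x : R) :
    ∑ i ∈ range (n + 1), (-1 : R) ^ i * n.choose i * f (x - i) =
      (-1) ^ n * Δ_[-1] ^[n] f x := by
  rw [fwdDiff_iter_eq_sum_shift, mul_sum]
  refine sum_congr rfl fun i hi => ?_
  obtain ⟨j, rfl⟩ := Nat.exists_eq_add_of_le (Nat.lt_succ_iff.mp (mem_range.mp hi))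
  simp only [nsmul_eq_mul, zsmul_eq_mul, Nat.add_sub_cancel_left]
  push_cast
  have hsign : (-1 : R) ^ (i + j) * (-1) ^ j = (-1) ^ i := by
    rw [pow_add, mul_assoc, ← pow_add, Even.neg_one_pow ⟨j, rfl⟩, mul_one]
  rw [mul_neg_one, ← sub_eq_add_neg, ← hsign]
  ring

lemma fwdDiff_neg_one_iter_inv_ascPochhammer {K : Type*} [Field K] (m n : ℕ) (x : K)
    (hx : (ascPochhammer K (n + m)).eval (x - n + 1) ≠ 0) :
    Δ_[-1] ^[n] (fun y => ((ascPochhammer K m).eval (y + 1))⁻¹) x =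
      (ascPochhammer K n).eval (m : K) * ((ascPochhammer K (n + m)).eval (x - n + 1))⁻¹ := by
  induction n generalizing x with
  | zero => simp
  | succ n ih =>
    have hx' : (ascPochhammer K (n + m + 1)).eval (x - n) ≠ 0 := by
      rwa [Nat.add_right_comm, Nat.cast_succ, sub_add_eq_sub_sub, sub_add_cancel] at hx
    have hshift : x + -1 - n + 1 = x - n := by ring
    have hcur : (ascPochhammer K (n + m)).eval (x - n + 1) ≠ 0 := by
      rw [ascPochhammer_succ_eval_left] at hx'
      exact right_ne_zero_of_mul hx'
    have hprev : (ascPochhammer K (n + m)).eval (x + -1 - n + 1) ≠ 0 := by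
      rw [hshift]
      rw [ascPochhammer_succ_eval] at hx'
      exact left_ne_zero_of_mul hx'
    rw [Function.iterate_succ_apply', fwdDiff, ih x hcur, ih (x + -1) hprev, ← mul_sub, hshift,
      inv_ascPochhammer_eval_sub_inv_ascPochhammer_eval_add_one _ _ hx',
      ascPochhammer_succ_eval n (m : K), Nat.add_right_comm, Nat.cast_succ, sub_add_eq_sub_sub,
      sub_add_cancel]
    push_cast
    ring

lemma gfall_neg_natCast (y : ℝ) (k : ℕ) :
    gfall y (-k) = ((ascPochhammer ℝ k).eval (y + 1))⁻¹ := by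
  rcases Nat.eq_zero_or_pos k with rfl | hk
  · simp [gfall]
  · rw [gfall, if_neg (by omega), ascPochhammer_eval_eq_prod_range]
    simp

lemma fall_eq_ascPochhammer_eval (r : ℝ) (n : ℕ) :
    fall r n = (ascPochhammer ℝ n).eval (r - n + 1) := by
  rw [fall, ← descPochhammer_eval_eq_prod_range, descPochhammer_eval_eq_ascPochhammer]

theorem stmt11_general (n m : ℕ) (x : ℝ)
    (hx : ∀ t : ℤ, 1 - (n : ℤ) ≤ t → t ≤ (m : ℤ) → x + t ≠ 0) :
    ∑ i ∈ Finset.range (n + 1), (-1 : ℝ) ^ i * (n.choose i) * gfall (x - i) (-(m : ℤ)) =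
      (-1 : ℝ) ^ n * gfall (x - n) (-((n : ℤ) + m)) * fall ((n : ℝ) + m - 1) n := by
  have hpoch : (ascPochhammer ℝ (n + m)).eval (x - n + 1) ≠ 0 := by
    rw [Ne, ascPochhammer_eval_eq_zero_iff]
    rintro ⟨k, hk, hkx⟩
    exact hx (1 - n + k) (by omega) (by omega) (by push_cast; linarith)
  have hdeg : -((n : ℤ) + m) = -((n + m : ℕ) : ℤ) := by push_cast; rfl
  rw [hdeg, gfall_neg_natCast, fall_eq_ascPochhammer_eval, show (n : ℝ) + m - 1 - n + 1 = m by ring]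
  simp only [gfall_neg_natCast]
  rw [sum_range_succ_neg_one_pow_mul_choose_mul_eq_fwdDiff_iter
      (fun y => ((ascPochhammer ℝ m).eval (y + 1))⁻¹),
    fwdDiff_neg_one_iter_inv_ascPochhammer m n x hpoch]
  ring

theorem stmt11 (n m : ℕ) (hn : 0 < n) (hm : 0 < m) (x : ℝ)
    (hx : ∀ t : ℤ, 1 - (n : ℤ) ≤ t → t ≤ (m : ℤ) → x + t ≠ 0) :
    ∑ i ∈ Finset.range (n + 1), (-1 : ℝ) ^ i * (n.choose i) * gfall (x - i) (-(m : ℤ)) =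
      (-1 : ℝ) ^ n * gfall (x - n) (-((n : ℤ) + m)) * fall ((n : ℝ) + m - 1) n :=
  stmt11_general n m x hx
end

section
/- Let x be a real number, and let m, n be positive integers such that x+j ≠ 0 for 0 ≤ j ≤ m+n-1 (as needed). Define the (n+1)×(n+1) matrix U with entries U_{i,j} = (x-m-j)_i for 0 ≤ i,j ≤ n, where (a)_i is the falling factorial. Define the vector σ with entries σ_j = (-1)^j · C(n,j) · (n+m)_{n+1} / (n!·(m+j)) for 0 ≤ j ≤ n. Then U·σ = (1, (x)₁, (x)₂, …, (x)_n)ᵀ. -/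
open Finset Polynomial

lemma fall_eval (x t : ℝ) (i : ℕ) :
    (∏ k ∈ Finset.range i, (C (x - (k : ℝ)) - X)).eval t = fall (x - t) i := by
  rw [eval_prod, fall]
  refine Finset.prod_congr rfl fun k _ => ?_
  simp; ring

lemma fall_prod (n m : ℕ) :
    fall ((n : ℝ) + m) (n + 1) = ∏ k ∈ Finset.range (n + 1), ((m : ℝ) + k) := by
  rw [fall, ← Finset.prod_range_reflect]
  refine Finset.prod_congr rfl fun k hk => ?_
  rw [Finset.mem_range] at hk
  have : n + 1 - 1 - k = n - k := by omega
  rw [this, Nat.cast_sub (by omega)]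
  ring

lemma prod_sub_nodes (n j : ℕ) (hj : j < n + 1) :
    ∏ k ∈ (Finset.range (n + 1)).erase j, ((j : ℝ) - k)
      = (-1) ^ (n - j) * (j.factorial : ℝ) * ((n - j).factorial : ℝ) := by
  have herase : (Finset.range (n + 1)).erase j
      = Finset.range j ∪ Finset.Ico (j + 1) (n + 1) := by
    ext k
    simp only [Finset.mem_erase, Finset.mem_range, Finset.mem_union, Finset.mem_Ico]
    omega
  rw [herase, Finset.prod_union (by
    simp only [Finset.disjoint_left, Finset.mem_range, Finset.mem_Ico]; omega)]
  have h1 : ∏ k ∈ Finset.range j, ((j : ℝ) - k) = (j.factorial : ℝ) := by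
    have hnat : ∏ k ∈ Finset.range j, (j - k) = j.factorial := by
      rw [← Finset.prod_range_reflect, ← Finset.prod_range_add_one_eq_factorial]
      refine Finset.prod_congr rfl fun k hk => ?_
      rw [Finset.mem_range] at hk; omega
    calc ∏ k ∈ Finset.range j, ((j : ℝ) - k)
        = ∏ k ∈ Finset.range j, (((j - k : ℕ) : ℝ)) := by
          refine Finset.prod_congr rfl fun k hk => ?_
          rw [Finset.mem_range] at hk
          rw [Nat.cast_sub (by omega)]
      _ = (j.factorial : ℝ) := by rw [← Nat.cast_prod, hnat]
  have h2 : ∏ k ∈ Finset.Ico (j + 1) (n + 1), ((j : ℝ) - k)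
      = (-1) ^ (n - j) * ((n - j).factorial : ℝ) := by
    have hr : Finset.Ico (j + 1) (n + 1) = (Finset.range (n - j)).map
        ⟨fun l => j + 1 + l, add_right_injective (j + 1)⟩ := by
      ext k
      simp only [Finset.mem_Ico, Finset.mem_map, Finset.mem_range, Function.Embedding.coeFn_mk]
      constructor
      · intro h; exact ⟨k - (j + 1), by omega, by omega⟩
      · rintro ⟨l, hl, rfl⟩; omega
    rw [hr, Finset.prod_map]
    have hcong : ∀ l ∈ Finset.range (n - j),
        ((j : ℝ) - (⟨fun l => j + 1 + l, add_right_injective (j + 1)⟩ : ℕ ↪ ℕ) l)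
          = (-1) * ((l : ℝ) + 1) := by
      intro l _; simp only [Function.Embedding.coeFn_mk]; push_cast; ring
    rw [Finset.prod_congr rfl hcong, Finset.prod_mul_distrib, Finset.prod_const]
    congr 1
    · simp
    · rw [← Finset.prod_range_add_one_eq_factorial, Nat.cast_prod]
      push_cast; rfl
  rw [h1, h2]; ring

lemma prod_nodes (n m j : ℕ) (hj : j < n + 1) :
    (∏ k ∈ (Finset.range (n + 1)).erase j, ((m : ℝ) + k)) * ((m : ℝ) + j)
      = fall ((n : ℝ) + m) (n + 1) := by
  rw [fall_prod, ← Finset.prod_erase_mul _ _ (Finset.mem_range.mpr hj)]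

lemma key (n m i : ℕ) (hi : i ≤ n) (hm : 0 < m) (x : ℝ) :
    ∑ j ∈ Finset.range (n + 1),
      fall (x - m - j) i *
        ((-1 : ℝ) ^ j * (n.choose j) * fall ((n : ℝ) + m) (n + 1) /
          ((n.factorial : ℝ) * ((m : ℝ) + j))) = fall x i := by
  classical
  set v : ℕ → ℝ := fun j => (m : ℝ) + j with hv
  have hvs : Set.InjOn v (Finset.range (n + 1)) := by
    intro a _ b _ hab
    have : (a : ℝ) = b := by simpa [hv] using hab
    exact_mod_cast this
  have hdeg : (∏ k ∈ Finset.range i, (C (x - (k : ℝ)) - X)).degree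
      < (#(Finset.range (n + 1)) : WithBot ℕ) := by
    have h1 : (∏ k ∈ Finset.range i, (C (x - (k : ℝ)) - X)).natDegree ≤ i := by
      refine le_trans (Polynomial.natDegree_prod_le _ _) (le_of_eq ?_)
      calc ∑ k ∈ Finset.range i, (C (x - (k : ℝ)) - X).natDegree
          = ∑ _k ∈ Finset.range i, 1 := by
            refine Finset.sum_congr rfl fun k _ => ?_
            rw [show C (x - (k : ℝ)) - X = -(X - C (x - (k : ℝ))) by ring,
              Polynomial.natDegree_neg, Polynomial.natDegree_X_sub_C]
        _ = i := by simp
    have h2 : ((i : ℕ) : WithBot ℕ) < (#(Finset.range (n + 1)) : WithBot ℕ) := by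
      rw [Finset.card_range]; exact_mod_cast Nat.lt_succ_of_le hi
    refine lt_of_le_of_lt (le_trans Polynomial.degree_le_natDegree ?_) h2
    exact_mod_cast h1
  have hinterp := Lagrange.eq_interpolate hvs hdeg
  have h0 := congrArg (Polynomial.eval (0 : ℝ)) hinterp
  rw [Lagrange.interpolate_apply, Polynomial.eval_finset_sum, fall_eval, sub_zero] at h0
  rw [h0]
  refine Finset.sum_congr rfl fun j hj => ?_
  rw [Finset.mem_range] at hj
  rw [Polynomial.eval_mul, Polynomial.eval_C, fall_eval]
  have hval : fall (x - v j) i = fall (x - m - j) i := by rw [hv]; ring_nf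
  rw [hval]
  congr 1
  -- basis evaluation
  rw [Lagrange.basis, Polynomial.eval_prod]
  have hprod : ∀ k ∈ (Finset.range (n + 1)).erase j,
      (Lagrange.basisDivisor (v j) (v k)).eval 0
        = ((j : ℝ) - k)⁻¹ * (-((m : ℝ) + k)) := by
    intro k hk
    rw [Lagrange.basisDivisor]
    simp only [Polynomial.eval_mul, Polynomial.eval_C, Polynomial.eval_sub, Polynomial.eval_X]
    rw [hv]
    congr 1
    · congr 1; ring
    · ring
  rw [Finset.prod_congr rfl hprod, Finset.prod_mul_distrib, Finset.prod_inv_distrib]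
  have hA := prod_sub_nodes n j hj
  have hneg : ∏ k ∈ (Finset.range (n + 1)).erase j, (-((m : ℝ) + k))
      = (-1) ^ n * ∏ k ∈ (Finset.range (n + 1)).erase j, ((m : ℝ) + k) := by
    have hc : ∀ k ∈ (Finset.range (n + 1)).erase j,
        -((m : ℝ) + k) = (-1) * ((m : ℝ) + k) := fun k _ => by ring
    rw [Finset.prod_congr rfl hc, Finset.prod_mul_distrib, Finset.prod_const,
      Finset.card_erase_of_mem (Finset.mem_range.mpr hj), Finset.card_range]
    norm_num
  have hP := prod_nodes n m j hj
  rw [hA, hneg]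
  have hjfac : (j.factorial : ℝ) ≠ 0 := Nat.cast_ne_zero.mpr j.factorial_ne_zero
  have hnjfac : ((n - j).factorial : ℝ) ≠ 0 := Nat.cast_ne_zero.mpr (n - j).factorial_ne_zero
  have hnfac : (n.factorial : ℝ) ≠ 0 := Nat.cast_ne_zero.mpr n.factorial_ne_zero
  have hmj : (m : ℝ) + j ≠ 0 := by positivity
  have hchoose : (n.choose j : ℝ) * (j.factorial : ℝ) * ((n - j).factorial : ℝ)
      = (n.factorial : ℝ) := by
    exact_mod_cast congrArg (Nat.cast : ℕ → ℝ)
      (Nat.choose_mul_factorial_mul_factorial (Nat.lt_succ_iff.mp hj))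
  rw [← hP]
  have hsign : (-1 : ℝ) ^ (n - j) * (-1 : ℝ) ^ n = (-1 : ℝ) ^ j := by
    rw [← pow_add]
    have h2 : (n - j) + n = j + 2 * (n - j) := by omega
    rw [h2, pow_add, pow_mul]
    norm_num
  rw [← hchoose, ← hsign]
  have hs : ((-1 : ℝ) ^ (n - j)) ≠ 0 := by positivity
  field_simp
  have hch : (n.choose j : ℝ) ≠ 0 :=
    Nat.cast_ne_zero.mpr (Nat.choose_pos (Nat.lt_succ_iff.mp hj)).ne'
  have hsq : ((-1 : ℝ) ^ (n - j)) * ((-1 : ℝ) ^ (n - j)) = 1 := by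
    rw [← pow_add, ← two_mul, pow_mul]; norm_num
  rw [div_eq_iff (by
    exact hch)]
  linear_combination (n.choose j : ℝ) * hsq

theorem stmt13 (n m : ℕ) (hn : 0 < n) (hm : 0 < m) (x : ℝ)
    (hx : ∀ j : ℕ, j ≤ m + n - 1 → x + j ≠ 0) :
    (Matrix.of fun i j : Fin (n + 1) => fall (x - m - (j : ℕ)) (i : ℕ)).mulVec
        (fun j : Fin (n + 1) =>
          (-1 : ℝ) ^ (j : ℕ) * (n.choose j) * fall ((n : ℝ) + m) (n + 1) /
            ((n.factorial : ℝ) * ((m : ℝ) + (j : ℕ)))) =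
      fun i : Fin (n + 1) => fall x (i : ℕ) := by
  funext i
  simp only [Matrix.mulVec, dotProduct, Matrix.of_apply]
  rw [Fin.sum_univ_eq_sum_range (fun j => fall (x - m - (j : ℕ)) (i : ℕ) *
    ((-1 : ℝ) ^ j * (n.choose j) * fall ((n : ℝ) + m) (n + 1) /
      ((n.factorial : ℝ) * ((m : ℝ) + j))))]
  exact key n m i (Nat.lt_succ_iff.mp i.isLt) hm x
end

section
/- Let s₁ < s₂ < s₃ be rational numbers with width w := 1/(s₂-s₁) + 1/(s₃-s₂) < 1, and suppose π(1) = 0, where π(n) counts the entries of the sequences l_k := ⌊k·s₂⌋ - ⌈k·s₁⌉ + 1 and r_k := ⌊k·s₃⌋ - ⌈k·s₂⌉ + 1 (k ≥ 1) that are at most n. Then there exists an integer n ≥ 2 with π(n) = n if and only if there exists a positive integer v such that r_v = l_{r_v - v}. -/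
/-!
Because `⌊x⌋ + ⌊y⌋ ≤ ⌊x + y⌋` and `⌈x + y⌉ ≤ ⌈x⌉ + ⌈y⌉`, a sequence `⌊k b⌋ - ⌈k a⌉ + 1` satisfies
`f m + f k ≤ f (m + k) + 1`, so it is strictly increasing once `f 1 ≥ 2`; and `π 1 = 0` gives
`l 1, r 1 ≥ 2` since both sequences tend to infinity. The number of indices `k ≥ 1` with `f k ≤ n`
of a strictly increasing `f` equals `u` at `n = f u`, and otherwise rises by one exactly when `n`
passes a value of `f`. Hence `π n - n` is negative at `n = 1` and can only increase at a common
value `n = l u = r v`, where `π n = u + v`: the first `n ≥ 2` with `π n = n` is such a value with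
`u + v = n`, i.e. `r v = l (r v - v)`. Conversely such a `v` gives `π (r v) = r v`.
-/

open Filter

lemma Nat.exists_lt_self_and_succ_le {N : ℕ → ℕ} {a b : ℕ} (ha : N a < a) (hab : a ≤ b)
    (hb : b ≤ N b) : ∃ j, N j < j ∧ j + 1 ≤ N (j + 1) := by
  induction b, hab using Nat.le_induction with
  | base => omega
  | succ b _ ih => exact if hb' : N b < b then ⟨b, hb', hb⟩ else ih (by omega)

lemma Filter.Tendsto.finite_setOf_le {f : ℕ → ℤ} (hf : Tendsto f atTop atTop) (n : ℤ) :
    {k | f k ≤ n}.Finite := by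
  have := hf.eventually_gt_atTop n
  rw [← Nat.cofinite_eq_atTop, eventually_cofinite] at this
  simpa only [not_lt] using this

/-- `Nat.card` is `0` on an infinite type, so this is only a count when the set is finite. -/
noncomputable def countLE (f : ℕ → ℤ) (n : ℤ) : ℕ := Nat.card {k : ℕ // 1 ≤ k ∧ f k ≤ n}

section Counting

variable {f g : ℕ → ℤ}

lemma countLE_congr {m n : ℤ} (h : ∀ k, 1 ≤ k → (f k ≤ m ↔ f k ≤ n)) :
    countLE f m = countLE f n :=
  Nat.card_congr <| Equiv.subtypeEquivRight fun k => and_congr_right (h k)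

lemma countLE_eq_of_forall_le_iff {n : ℤ} {u : ℕ} (h : ∀ k, 1 ≤ k → (f k ≤ n ↔ k ≤ u)) :
    countLE f n = u := by
  have hIcc : ∀ k, (1 ≤ k ∧ f k ≤ n) ↔ k ∈ Finset.Icc 1 u := fun k => by
    rw [Finset.mem_Icc]
    exact ⟨fun hk => ⟨hk.1, (h k hk.1).1 hk.2⟩, fun hk => ⟨hk.1, (h k hk.1).2 hk.2⟩⟩
  rw [countLE, Nat.card_congr (Equiv.subtypeEquivRight hIcc), Nat.card_eq_fintype_card,
    Fintype.card_coe, Nat.card_Icc, Nat.add_sub_cancel]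

lemma lt_of_countLE_eq_zero {n : ℤ} (hfin : {k | f k ≤ n}.Finite) (h : countLE f n = 0)
    {k : ℕ} (hk : 1 ≤ k) : n < f k := by
  by_contra! hkn
  have : Finite {k : ℕ // 1 ≤ k ∧ f k ≤ n} :=
    (hfin.subset fun _ hj => hj.2 : {k | 1 ≤ k ∧ f k ≤ n}.Finite).to_subtype
  have : Nonempty {k : ℕ // 1 ≤ k ∧ f k ≤ n} := ⟨⟨k, hk, hkn⟩⟩
  exact Nat.card_pos.ne' h

lemma countLE_add_one_of_forall_ne {n : ℤ} (h : ∀ k, 1 ≤ k → f k ≠ n + 1) :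
    countLE f (n + 1) = countLE f n :=
  countLE_congr fun k hk => by have := h k hk; omega

namespace StrictMono

lemma le_apply_add (hf : StrictMono f) (m k : ℕ) : f m + k ≤ f (m + k) := by
  induction k with
  | zero => simp
  | succ k ih => have := hf (Nat.lt_add_one (m + k)); rw [← Nat.add_assoc]; push_cast; omega

lemma countLE_apply (hf : StrictMono f) (u : ℕ) : countLE f (f u) = u :=
  countLE_eq_of_forall_le_iff fun _ _ => hf.le_iff_le

lemma countLE_apply_sub_one (hf : StrictMono f) (u : ℕ) : countLE f (f u - 1) = u - 1 :=
  countLE_eq_of_forall_le_iff fun k hk => by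
    rw [Int.le_sub_one_iff, hf.lt_iff_lt]
    omega

lemma countLE_add_one_le (hf : StrictMono f) (n : ℤ) : countLE f (n + 1) ≤ countLE f n + 1 := by
  by_cases hn : ∃ u, f u = n + 1
  · obtain ⟨u, hu⟩ := hn
    have := hf.countLE_apply_sub_one u
    rw [← hu, hf.countLE_apply, show n = f u - 1 by omega, this]
    omega
  · push Not at hn
    rw [countLE_add_one_of_forall_ne fun k _ => hn k]
    exact Nat.le_succ _

lemma countLE_one_eq_zero (hf : StrictMono f) (hf1 : 1 < f 1) : countLE f 1 = 0 :=
  countLE_eq_of_forall_le_iff fun k hk => by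
    have := hf.monotone hk
    omega

end StrictMono

lemma exists_apply_eq_of_countLE_add_countLE_jump (hg : StrictMono g) {n : ℤ}
    (hjump : countLE f n + countLE g n + 1 < countLE f (n + 1) + countLE g (n + 1)) :
    ∃ u, 1 ≤ u ∧ f u = n + 1 := by
  by_contra! h
  have := countLE_add_one_of_forall_ne h
  have := hg.countLE_add_one_le n
  omega

theorem exists_countLE_add_countLE_eq_iff (hf : StrictMono f) (hg : StrictMono g)
    (hf1 : 1 < f 1) (hg1 : 1 < g 1) :
    (∃ n : ℕ, 2 ≤ n ∧ countLE f n + countLE g n = n) ↔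
      ∃ v, 1 ≤ v ∧ g v = f (g v - v).toNat := by
  constructor
  · rintro ⟨n, hn, hNn⟩
    have h1 : countLE f (1 : ℕ) + countLE g (1 : ℕ) < 1 := by
      rw [Nat.cast_one, hf.countLE_one_eq_zero hf1, hg.countLE_one_eq_zero hg1]
      exact Nat.one_pos
    obtain ⟨j, hj, hj1⟩ := Nat.exists_lt_self_and_succ_le
      (N := fun n : ℕ => countLE f n + countLE g n) h1 (by omega) hNn.ge
    push_cast at hj hj1
    obtain ⟨u, hu, hfu⟩ :=
      exists_apply_eq_of_countLE_add_countLE_jump (f := f) hg (n := j) (by omega)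
    obtain ⟨v, hv, hgv⟩ :=
      exists_apply_eq_of_countLE_add_countLE_jump (f := g) hf (n := j) (by omega)
    have hj' : (j : ℤ) = f u - 1 := by omega
    rw [← hfu, hf.countLE_apply, hfu, ← hgv, hg.countLE_apply] at hj1
    rw [hj', hf.countLE_apply_sub_one, ← hj', show (j : ℤ) = g v - 1 by omega,
      hg.countLE_apply_sub_one] at hj
    refine ⟨v, hv, ?_⟩
    rw [show (g v - v).toNat = u by omega, hfu, hgv]
  · rintro ⟨v, hv, hgv⟩
    have hgv_gt : (v : ℤ) + 1 ≤ g v := by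
      have := hg.le_apply_add 1 (v - 1)
      rw [Nat.add_sub_cancel' hv] at this
      omega
    refine ⟨(g v).toNat, by omega, ?_⟩
    rw [Int.toNat_of_nonneg (by omega), hg.countLE_apply, hgv, hf.countLE_apply, ← hgv]
    omega

end Counting

section DilatedInterval

variable {K : Type*} [Field K] [LinearOrder K] [IsStrictOrderedRing K] [FloorRing K]

/-- For `a ≤ b`, the number of integers in `[k a, k b]`. -/
def dilatedIccCount (a b : K) (k : ℕ) : ℤ := ⌊(k : K) * b⌋ - ⌈(k : K) * a⌉ + 1

lemma sub_one_lt_dilatedIccCount (a b : K) (k : ℕ) :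
    (k : K) * (b - a) - 1 < dilatedIccCount a b k := by
  have := Int.sub_one_lt_floor ((k : K) * b)
  have := Int.ceil_lt_add_one ((k : K) * a)
  rw [dilatedIccCount]
  push_cast
  linarith

lemma tendsto_dilatedIccCount {a b : K} (hab : a < b) :
    Tendsto (dilatedIccCount a b) atTop atTop := by
  rw [← tendsto_intCast_atTop_iff (R := K)]
  refine tendsto_atTop_mono (fun k => (sub_one_lt_dilatedIccCount a b k).le) ?_
  simpa only [sub_eq_add_neg] using tendsto_atTop_add_const_right _ (-1)
    (tendsto_natCast_atTop_atTop.atTop_mul_const (sub_pos.2 hab))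

lemma dilatedIccCount_add_le (a b : K) (m k : ℕ) :
    dilatedIccCount a b m + dilatedIccCount a b k ≤ dilatedIccCount a b (m + k) + 1 := by
  have := Int.le_floor_add ((m : K) * b) ((k : K) * b)
  have := Int.ceil_add_le ((m : K) * a) ((k : K) * a)
  simp only [dilatedIccCount, Nat.cast_add, add_mul]
  omega

lemma strictMono_dilatedIccCount {a b : K} (h : 1 < dilatedIccCount a b 1) :
    StrictMono (dilatedIccCount a b) :=
  strictMono_nat_of_lt_succ fun k => by
    have := dilatedIccCount_add_le a b k 1
    omega

end DilatedInterval

theorem stmt15_general (s₁ s₂ s₃ : ℚ) (h12 : s₁ < s₂) (h23 : s₂ < s₃)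
    (l r : ℕ → ℤ)
    (hl : ∀ k : ℕ, l k = ⌊(k : ℚ) * s₂⌋ - ⌈(k : ℚ) * s₁⌉ + 1)
    (hr : ∀ k : ℕ, r k = ⌊(k : ℚ) * s₃⌋ - ⌈(k : ℚ) * s₂⌉ + 1)
    (π : ℕ → ℕ)
    (hπ : ∀ n : ℕ, π n = Nat.card {k : ℕ // 1 ≤ k ∧ l k ≤ (n : ℤ)} +
        Nat.card {k : ℕ // 1 ≤ k ∧ r k ≤ (n : ℤ)})
    (hπ1 : π 1 = 0) :
    (∃ n : ℕ, 2 ≤ n ∧ π n = n) ↔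
      ∃ v : ℕ, 1 ≤ v ∧ r v = l ((r v - v).toNat) := by
  obtain rfl : l = dilatedIccCount s₁ s₂ := funext hl
  obtain rfl : r = dilatedIccCount s₂ s₃ := funext hr
  have hπ' (n : ℕ) :
      π n = countLE (dilatedIccCount s₁ s₂) n + countLE (dilatedIccCount s₂ s₃) n :=
    hπ n
  rw [hπ', Nat.cast_one] at hπ1
  have hl1 := lt_of_countLE_eq_zero ((tendsto_dilatedIccCount h12).finite_setOf_le 1)
    (Nat.eq_zero_of_add_eq_zero_right hπ1) le_rfl
  have hr1 := lt_of_countLE_eq_zero ((tendsto_dilatedIccCount h23).finite_setOf_le 1)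
    (Nat.eq_zero_of_add_eq_zero_left hπ1) le_rfl
  simp only [hπ']
  exact exists_countLE_add_countLE_eq_iff (strictMono_dilatedIccCount hl1)
    (strictMono_dilatedIccCount hr1) hl1 hr1

theorem stmt15 (s₁ s₂ s₃ : ℚ) (h12 : s₁ < s₂) (h23 : s₂ < s₃)
    (hw : 1 / (s₂ - s₁) + 1 / (s₃ - s₂) < 1)
    (l r : ℕ → ℤ)
    (hl : ∀ k : ℕ, l k = ⌊(k : ℚ) * s₂⌋ - ⌈(k : ℚ) * s₁⌉ + 1)
    (hr : ∀ k : ℕ, r k = ⌊(k : ℚ) * s₃⌋ - ⌈(k : ℚ) * s₂⌉ + 1)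
    (π : ℕ → ℕ)
    (hπ : ∀ n : ℕ, π n = Nat.card {k : ℕ // 1 ≤ k ∧ l k ≤ (n : ℤ)} +
        Nat.card {k : ℕ // 1 ≤ k ∧ r k ≤ (n : ℤ)})
    (hπ1 : π 1 = 0) :
    (∃ n : ℕ, 2 ≤ n ∧ π n = n) ↔
      ∃ v : ℕ, 1 ≤ v ∧ r v = l ((r v - v).toNat) :=
  stmt15_general s₁ s₂ s₃ h12 h23 l r hl hr π hπ hπ1
end

section
/- Let a, b, c be pairwise coprime positive integers and e, f, g positive integers with gcd(e,f,g) = 1 and a·e + b·f = c·g. Then there exists a unique integer r with 1 ≤ r ≤ g such that g divides e·r - b and g divides f·r + a. -/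
/-!
Since `gcd(e, f, g) = 1` there are integers with `e u + f v + g w = 1`. Modulo `g` this makes
`e` and `f` jointly invertible, and together with `a e ≡ -b f` it shows that the solutions of
the two congruences form exactly the residue class of `x = u b - v a`. Every residue class
modulo `g` has exactly one representative in `[1, g]`.
-/

theorem Nat.exists_mul_add_mul_add_mul_eq_one {e f g : ℕ} (h : Nat.gcd e (Nat.gcd f g) = 1) :
    ∃ u v w : ℤ, e * u + f * v + g * w = 1 := by
  obtain ⟨u, z, huz⟩ := Nat.isCoprime_iff_coprime.mpr h
  refine ⟨u, z * Nat.gcdA f g, z * Nat.gcdB f g, ?_⟩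
  linear_combination huz - z * Nat.gcd_eq_gcd_ab f g

theorem dvd_sub_and_dvd_add_iff_dvd_sub {R : Type*} [CommRing R] {a b c e f g u v w : R}
    (huvw : e * u + f * v + g * w = 1) (hrel : a * e + b * f = c * g) (y : R) :
    (g ∣ e * y - b ∧ g ∣ f * y + a) ↔ g ∣ y - (u * b - v * a) := by
  constructor
  · rintro ⟨⟨k, hk⟩, ⟨l, hl⟩⟩
    exact ⟨u * k + v * l + w * y, by linear_combination u * hk + v * hl - y * huvw⟩
  · rintro ⟨k, hk⟩
    exact ⟨⟨e * k - b * w - v * c, by linear_combination e * hk + b * huvw - v * hrel⟩,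
      ⟨f * k + u * c + a * w, by linear_combination f * hk - a * huvw + u * hrel⟩⟩

theorem Int.existsUnique_mem_Icc_dvd_sub {g : ℕ} (hg : 0 < g) (x : ℤ) :
    ∃! r : ℕ, 1 ≤ r ∧ r ≤ g ∧ (g : ℤ) ∣ r - x := by
  have hg' : (0 : ℤ) < g := by exact_mod_cast hg
  have h0 := Int.emod_nonneg (x - 1) hg'.ne'
  have hlt := Int.emod_lt_of_pos (x - 1) hg'
  have hdvd : (g : ℤ) ∣ (x - 1) - (x - 1) % g := Int.dvd_self_sub_emod
  refine ⟨((x - 1) % g + 1).toNat, ⟨by omega, by omega, ?_⟩, ?_⟩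
  · rw [Int.toNat_of_nonneg (by omega), show (x - 1) % g + 1 - x = -((x - 1) - (x - 1) % g) by ring]
    exact hdvd.neg_right
  · rintro r ⟨hr1, hrg, hr⟩
    have hsub : (g : ℤ) ∣ r - ((x - 1) % g + 1) := by
      rw [show (r : ℤ) - ((x - 1) % g + 1) = (r - x) + ((x - 1) - (x - 1) % g) by ring]
      exact dvd_add hr hdvd
    have := Int.eq_zero_of_abs_lt_dvd hsub (by rw [abs_lt]; omega)
    omega

theorem stmt17_general (a b c e f g : ℕ)
    (hg : 0 < g)
    (hefg : Nat.gcd e (Nat.gcd f g) = 1)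
    (hrel : a * e + b * f = c * g) :
    ∃! r : ℕ, 1 ≤ r ∧ r ≤ g ∧
      (g : ℤ) ∣ ((e : ℤ) * r - b) ∧ (g : ℤ) ∣ ((f : ℤ) * r + a) := by
  have hrelℤ : (a : ℤ) * e + b * f = c * g := by exact_mod_cast hrel
  obtain ⟨u, v, w, huvw⟩ := Nat.exists_mul_add_mul_add_mul_eq_one hefg
  simpa only [dvd_sub_and_dvd_add_iff_dvd_sub huvw hrelℤ] using
    Int.existsUnique_mem_Icc_dvd_sub hg (u * b - v * a)

theorem stmt17 (a b c e f g : ℕ)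
    (ha : 0 < a) (hb : 0 < b) (hc : 0 < c)
    (he : 0 < e) (hf : 0 < f) (hg : 0 < g)
    (hab : Nat.Coprime a b) (hac : Nat.Coprime a c) (hbc : Nat.Coprime b c)
    (hefg : Nat.gcd e (Nat.gcd f g) = 1)
    (hrel : a * e + b * f = c * g) :
    ∃! r : ℕ, 1 ≤ r ∧ r ≤ g ∧
      (g : ℤ) ∣ ((e : ℤ) * r - b) ∧ (g : ℤ) ∣ ((f : ℤ) * r + a) :=
  stmt17_general a b c e f g hg hefg hrel
end

section
/- Let n ≥ 1 and define the (n+1)-component vector ξ with entries ξ_i = (-1)^i · C(n,i) · (A+1-n+i)_i · (B-2-i)_{n-i} for 0 ≤ i ≤ n, and the n×(n+1) matrix M₁ with entries (M₁)_{j,i} = (A+1)_{n-i} · (B-2-j)_i for 0 ≤ j ≤ n-1, 0 ≤ i ≤ n, where (x)_k denotes the falling factorial and A, B are real numbers. Then M₁·ξ = 0. -/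
open Finset Polynomial

theorem Polynomial.sum_range_neg_one_pow_mul_choose_mul_eval_eq_zero {R : Type*} [CommRing R]
    {P : R[X]} {n : ℕ} (hP : P.natDegree < n) :
    ∑ i ∈ range (n + 1), (-1 : R) ^ i * n.choose i * P.eval (i : R) = 0 := by
  have hΔ := fwdDiff_iter_eq_sum_shift (1 : R) P.eval n 0
  rw [fwdDiff_iter_eq_zero_of_degree_lt hP] at hΔ
  have hsign : ∀ i ∈ range (n + 1), (-1 : R) ^ i * n.choose i * P.eval (i : R) =
      (-1) ^ n * (((-1 : ℤ) ^ (n - i) * n.choose i) • P.eval (0 + i • (1 : R))) := by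
    intro i hi
    have hin : i ≤ n := Nat.lt_succ_iff.mp (mem_range.mp hi)
    have hpow : (-1 : R) ^ i = (-1) ^ n * (-1) ^ (n - i) := by
      rw [← pow_add, show n + (n - i) = i + 2 * (n - i) by omega, pow_add, pow_mul]
      simp
    rw [zsmul_eq_mul, zero_add, nsmul_one, hpow]
    push_cast
    ring
  rw [sum_congr rfl hsign, ← mul_sum, ← hΔ, Pi.zero_apply, mul_zero]

lemma fall_eq_eval_descPochhammer (x : ℝ) (m : ℕ) : fall x m = (descPochhammer ℝ m).eval x :=
  (descPochhammer_eval_eq_prod_range m x).symm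

lemma fall_add (x : ℝ) (a b : ℕ) : fall x (a + b) = fall x a * fall (x - a) b := by
  simp only [fall_eq_eval_descPochhammer, ← descPochhammer_mul, eval_mul, eval_comp, eval_sub,
    eval_X, eval_natCast]

lemma fall_sub_add_of_le (c : ℝ) {a b : ℕ} (hab : a ≤ b) (m : ℕ) :
    fall (c - a) (b - a + m) = fall (c - a) (b - a) * fall (c - b) m := by
  rw [fall_add, Nat.cast_sub hab, sub_sub, add_sub_cancel]

lemma fall_mul_fall_sub_sub (x : ℝ) {i n : ℕ} (hi : i ≤ n) :
    fall x (n - i) * fall (x - n + i) i = fall x n := by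
  rw [← Nat.sub_add_cancel hi, fall_add, Nat.sub_add_cancel hi, Nat.cast_sub hi, sub_sub_eq_add_sub,
    add_sub_right_comm]

lemma fall_sub_mul_fall_sub_comm (c : ℝ) {i j n : ℕ} (hi : i ≤ n) (hj : j ≤ n) :
    fall (c - j) i * fall (c - i) (n - i) = fall (c - j) (n - j) * fall (c - i) j := by
  wlog hij : i ≤ j generalizing i j
  · rw [mul_comm, ← this hj hi (le_of_not_ge hij), mul_comm]
  have hsplit_n : fall (c - i) (n - i) = fall (c - i) (j - i) * fall (c - j) (n - j) := by
    rw [← fall_sub_add_of_le c hij, show j - i + (n - j) = n - i by omega]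
  have hsplit_j : fall (c - i) j = fall (c - i) (j - i) * fall (c - j) i := by
    rw [← fall_sub_add_of_le c hij, Nat.sub_add_cancel hij]
  rw [hsplit_n, hsplit_j]
  ring

lemma sum_range_neg_one_pow_mul_choose_mul_fall_eq_zero (c : ℝ) {n j : ℕ} (hj : j < n) :
    ∑ i ∈ range (n + 1), (-1 : ℝ) ^ i * n.choose i * fall (c - i) j = 0 := by
  have hdeg : ((descPochhammer ℝ j).comp (C c - X)).natDegree < n := by
    refine lt_of_le_of_lt (natDegree_comp_le.trans ?_) hj
    rw [descPochhammer_natDegree, ← neg_sub, natDegree_neg, natDegree_X_sub_C, mul_one]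
  simpa [fall_eq_eval_descPochhammer] using
    sum_range_neg_one_pow_mul_choose_mul_eval_eq_zero hdeg

theorem stmt19_general (n : ℕ) (A B : ℝ) :
    (Matrix.of fun (j : Fin n) (i : Fin (n + 1)) =>
        fall (A + 1) (n - (i : ℕ)) * fall (B - 2 - (j : ℕ)) (i : ℕ)).mulVec
      (fun i : Fin (n + 1) =>
        (-1 : ℝ) ^ (i : ℕ) * (n.choose i) * fall (A + 1 - n + (i : ℕ)) (i : ℕ) *
          fall (B - 2 - (i : ℕ)) (n - (i : ℕ))) = 0 := by
  funext j
  simp only [Matrix.mulVec, dotProduct, Matrix.of_apply, Pi.zero_apply]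
  have hterm : ∀ i : Fin (n + 1),
      fall (A + 1) (n - i) * fall (B - 2 - j) i *
          ((-1 : ℝ) ^ (i : ℕ) * n.choose i * fall (A + 1 - n + i) i * fall (B - 2 - i) (n - i))
        = fall (A + 1) n * fall (B - 2 - j) (n - j) *
          ((-1 : ℝ) ^ (i : ℕ) * n.choose i * fall (B - 2 - i) j) := by
    intro i
    have hi : (i : ℕ) ≤ n := Nat.lt_succ_iff.mp i.2
    rw [← fall_mul_fall_sub_sub (A + 1) hi]
    linear_combination fall (A + 1) (n - i) * fall (A + 1 - n + i) i * (-1 : ℝ) ^ (i : ℕ) *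
      n.choose i * fall_sub_mul_fall_sub_comm (B - 2) hi j.2.le
  rw [sum_congr rfl fun i _ => hterm i, ← mul_sum,
    Fin.sum_univ_eq_sum_range (fun i => (-1 : ℝ) ^ i * n.choose i * fall (B - 2 - i) j),
    sum_range_neg_one_pow_mul_choose_mul_fall_eq_zero (B - 2) j.2, mul_zero]

theorem stmt19 (n : ℕ) (hn : 1 ≤ n) (A B : ℝ) :
    (Matrix.of fun (j : Fin n) (i : Fin (n + 1)) =>
        fall (A + 1) (n - (i : ℕ)) * fall (B - 2 - (j : ℕ)) (i : ℕ)).mulVec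
      (fun i : Fin (n + 1) =>
        (-1 : ℝ) ^ (i : ℕ) * (n.choose i) * fall (A + 1 - n + (i : ℕ)) (i : ℕ) *
          fall (B - 2 - (i : ℕ)) (n - (i : ℕ))) = 0 :=
  stmt19_general n A B
end
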